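/- Let (Ψ₁,Ψ₂,Ψ₃) be the standard paraquaternionic structure on V and let κ₁, κ₂, κ₃ ∈ ℝ satisfy κ₁ + κ₂ ≠ 0, κ₁ + κ₃ ≠ 0, and κ₂ ≠ κ₃ (so that the eigenvalues 3κ₁, −3κ₂, −3κ₃ are all distinct). Let A = κ₁A^{Ψ₁} + κ₂A^{Ψ₂} + κ₃A^{Ψ₃}. Then the model 𝔐 = (V,⟨·,·⟩,A) is null Jordan Osserman if and only if κ₂κ₃(κ₁+κ₂)(κ₁+κ₃) > 0. -/

import Mathlib

open Matrix BigOperators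

/-- `V = ℝ⁴`. -/
abbrev V4 : Type := Fin 4 → ℝ

/-- The neutral inner product of signature (2,2):
`⟨x,y⟩ = −x₁y₁ − x₂y₂ + x₃y₃ + x₄y₄`. -/
def nip (x y : V4) : ℝ := -(x 0 * y 0) - x 1 * y 1 + x 2 * y 2 + x 3 * y 3

/-- The signs `ε₁ = ε₂ = −1`, `ε₃ = ε₄ = 1`. -/
def eps : Fin 4 → ℝ := ![-1, -1, 1, 1]

/-- The standard basis vectors `e i`. -/
def stdb (i : Fin 4) : V4 := fun j => if j = i then 1 else 0

/-- A 4-linear map `A : V⁴ → ℝ` (linearity in each slot). -/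
def IsMultilinear (A : V4 → V4 → V4 → V4 → ℝ) : Prop :=
  (∀ (c : ℝ) (x x' y z w : V4), A (c • x + x') y z w = c * A x y z w + A x' y z w) ∧
  (∀ (c : ℝ) (x y y' z w : V4), A x (c • y + y') z w = c * A x y z w + A x y' z w) ∧
  (∀ (c : ℝ) (x y z z' w : V4), A x y (c • z + z') w = c * A x y z w + A x y z' w) ∧
  (∀ (c : ℝ) (x y z w w' : V4), A x y z (c • w + w') = c * A x y z w + A x y z w')

/-- Curvature symmetries:
`A(x,y,z,v) = −A(y,x,z,v) = A(z,v,x,y)` and the first Bianchi identity. -/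
def HasCurvSym (A : V4 → V4 → V4 → V4 → ℝ) : Prop :=
  (∀ x y z w, A x y z w = - A y x z w) ∧
  (∀ x y z w, A x y z w = A z w x y) ∧
  (∀ x y z w, A x y z w + A y z x w + A z x y w = 0)

/-- An algebraic curvature tensor on `(V,⟨·,·⟩)`. -/
def IsModel (A : V4 → V4 → V4 → V4 → ℝ) : Prop := IsMultilinear A ∧ HasCurvSym A

/-- The Jacobi operator `J_A(x)`, as a matrix: it is the unique linear map with
`⟨J_A(x)y, z⟩ = A(y,x,x,z)`; its matrix entries are `J i j = ε i * A(e j, x, x, e i)`. -/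
def jacobi (A : V4 → V4 → V4 → V4 → ℝ) (x : V4) : Matrix (Fin 4) (Fin 4) ℝ :=
  Matrix.of fun i j => eps i * A (stdb j) x x (stdb i)

/-- Two endomorphisms of `V` are similar (conjugate by an invertible linear map). -/
def SimilarM4 (M N : Matrix (Fin 4) (Fin 4) ℝ) : Prop :=
  ∃ L : Matrix (Fin 4) (Fin 4) ℝ, IsUnit L.det ∧ M * L = L * N

/-- Spacelike Osserman: the characteristic polynomial of `J_A` is constant on
unit spacelike vectors. -/
def SpacelikeOsserman (A : V4 → V4 → V4 → V4 → ℝ) : Prop :=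
  ∀ u w : V4, nip u u = 1 → nip w w = 1 → (jacobi A u).charpoly = (jacobi A w).charpoly

/-- Timelike Osserman: the characteristic polynomial of `J_A` is constant on
unit timelike vectors. -/
def TimelikeOsserman (A : V4 → V4 → V4 → V4 → ℝ) : Prop :=
  ∀ u w : V4, nip u u = -1 → nip w w = -1 → (jacobi A u).charpoly = (jacobi A w).charpoly

/-- Null Osserman: `J_A(v)` is nilpotent for every null vector `v`. -/
def NullOsserman (A : V4 → V4 → V4 → V4 → ℝ) : Prop :=
  ∀ v : V4, nip v v = 0 → IsNilpotent (jacobi A v)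

/-- Spacelike Jordan Osserman: the Jordan normal form of `J_A` is constant on
unit spacelike vectors. -/
def SpacelikeJordanOsserman (A : V4 → V4 → V4 → V4 → ℝ) : Prop :=
  ∀ u w : V4, nip u u = 1 → nip w w = 1 → SimilarM4 (jacobi A u) (jacobi A w)

/-- Timelike Jordan Osserman. -/
def TimelikeJordanOsserman (A : V4 → V4 → V4 → V4 → ℝ) : Prop :=
  ∀ u w : V4, nip u u = -1 → nip w w = -1 → SimilarM4 (jacobi A u) (jacobi A w)

/-- Null Jordan Osserman: the Jordan normal form of `J_A` is constant on
nonzero null vectors. -/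
def NullJordanOsserman (A : V4 → V4 → V4 → V4 → ℝ) : Prop :=
  ∀ u w : V4, u ≠ 0 → w ≠ 0 → nip u u = 0 → nip w w = 0 →
    SimilarM4 (jacobi A u) (jacobi A w)

/-- The Ricci tensor `ρ_A(x,y) = Σᵢ εᵢ A(eᵢ,x,y,eᵢ)`. -/
def ricci (A : V4 → V4 → V4 → V4 → ℝ) (x y : V4) : ℝ :=
  ∑ i : Fin 4, eps i * A (stdb i) x y (stdb i)

/-- Einstein: `ρ_A = c⟨·,·⟩`. -/
def Einstein (A : V4 → V4 → V4 → V4 → ℝ) : Prop :=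
  ∃ c : ℝ, ∀ x y : V4, ricci A x y = c * nip x y

/-- The scalar curvature `τ_A = Σᵢ εᵢ ρ_A(eᵢ,eᵢ)`. -/
def scal (A : V4 → V4 → V4 → V4 → ℝ) : ℝ :=
  ∑ i : Fin 4, eps i * ricci A (stdb i) (stdb i)

/-- The Weyl tensor. -/
noncomputable def weyl (A : V4 → V4 → V4 → V4 → ℝ) (x y z v : V4) : ℝ :=
  A x y z v + (scal A / 6) * (nip y z * nip x v - nip x z * nip y v)
    - (1/2) * (ricci A y z * nip x v - ricci A x z * nip y v
        + ricci A x v * nip y z - ricci A y v * nip x z)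

/-- A 2-vector `x ∧ y`, represented by its antisymmetric coefficient matrix. -/
def wedge (x y : V4) : Matrix (Fin 4) (Fin 4) ℝ :=
  Matrix.of fun i j => x i * y j - x j * y i

/-- The Weyl tensor as a symmetric bilinear form on 2-vectors, determined by
`W_A(x∧y, z∧v) = W_A(x,y,z,v)`. -/
noncomputable def weylForm (A : V4 → V4 → V4 → V4 → ℝ) (α β : Matrix (Fin 4) (Fin 4) ℝ) : ℝ :=
  (1/4) * ∑ i : Fin 4, ∑ j : Fin 4, ∑ k : Fin 4, ∑ l : Fin 4,
    α i j * β k l * weyl A (stdb i) (stdb j) (stdb k) (stdb l)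

/-- `E₁^ε = (1/√2)(e₁∧e₂ + ε e₃∧e₄)`, `E₂^ε = (1/√2)(e₁∧e₃ + ε e₂∧e₄)`,
`E₃^ε = (1/√2)(e₁∧e₄ − ε e₂∧e₃)`.  For `ε = 1` this is the standard basis of the
self-dual 2-vectors `Λ⁺`; for `ε = −1`, of the anti-self-dual 2-vectors `Λ⁻`. -/
noncomputable def Evec (ε : ℝ) : Fin 3 → Matrix (Fin 4) (Fin 4) ℝ :=
  ![(Real.sqrt 2)⁻¹ • (wedge (stdb 0) (stdb 1) + ε • wedge (stdb 2) (stdb 3)),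
    (Real.sqrt 2)⁻¹ • (wedge (stdb 0) (stdb 2) + ε • wedge (stdb 1) (stdb 3)),
    (Real.sqrt 2)⁻¹ • (wedge (stdb 0) (stdb 3) - ε • wedge (stdb 1) (stdb 2))]

/-- The space `Λ⁺` of self-dual 2-vectors. -/
def LambdaPlus : Submodule ℝ (Matrix (Fin 4) (Fin 4) ℝ) :=
  Submodule.span ℝ (Set.range (Evec 1))

/-- The space `Λ⁻` of anti-self-dual 2-vectors. -/
def LambdaMinus : Submodule ℝ (Matrix (Fin 4) (Fin 4) ℝ) :=
  Submodule.span ℝ (Set.range (Evec (-1)))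

/-- Self-dual: the Weyl form vanishes identically on `Λ⁻`. -/
def SelfDual (A : V4 → V4 → V4 → V4 → ℝ) : Prop :=
  ∀ α ∈ LambdaMinus, ∀ β ∈ LambdaMinus, weylForm A α β = 0

/-- Anti-self-dual: the Weyl form vanishes identically on `Λ⁺`. -/
def AntiSelfDual (A : V4 → V4 → V4 → V4 → ℝ) : Prop :=
  ∀ α ∈ LambdaPlus, ∀ β ∈ LambdaPlus, weylForm A α β = 0

/-- The curvature tensor `A⁰` of constant sectional curvature `+1`. -/
def Acurv0 (x y z v : V4) : ℝ := nip y z * nip x v - nip x z * nip y v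

/-- The curvature tensor `A^Ψ` of a skew-adjoint endomorphism `Ψ`. -/
def AcurvPsi (Ψ : Matrix (Fin 4) (Fin 4) ℝ) (x y z v : V4) : ℝ :=
  nip (Ψ.mulVec y) z * nip (Ψ.mulVec x) v - nip (Ψ.mulVec x) z * nip (Ψ.mulVec y) v
    - 2 * nip (Ψ.mulVec x) y * nip (Ψ.mulVec z) v

/-- Skew-adjoint with respect to the neutral inner product. -/
def SkewAdjointM (Ψ : Matrix (Fin 4) (Fin 4) ℝ) : Prop :=
  ∀ x y : V4, nip (Ψ.mulVec x) y = - nip x (Ψ.mulVec y)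

/-- An orthogonal complex structure: skew-adjoint with `J² = −id`. -/
def OrthComplexStructure (J : Matrix (Fin 4) (Fin 4) ℝ) : Prop :=
  SkewAdjointM J ∧ J * J = -1

/-- An adapted paracomplex structure: skew-adjoint with `P² = id`. -/
def AdaptedParaStructure (P : Matrix (Fin 4) (Fin 4) ℝ) : Prop :=
  SkewAdjointM P ∧ P * P = 1

/-- A paraquaternionic structure. -/
def Paraquaternionic (P₁ P₂ P₃ : Matrix (Fin 4) (Fin 4) ℝ) : Prop :=
  SkewAdjointM P₁ ∧ SkewAdjointM P₂ ∧ SkewAdjointM P₃ ∧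
  P₁ * P₁ = -1 ∧ P₂ * P₂ = 1 ∧ P₃ * P₃ = 1 ∧
  P₁ * P₂ + P₂ * P₁ = 0 ∧ P₁ * P₃ + P₃ * P₁ = 0 ∧ P₂ * P₃ + P₃ * P₂ = 0

/-- The standard paraquaternionic structure: `Ψ₁`. -/
def psi1 : Matrix (Fin 4) (Fin 4) ℝ :=
  !![0, 1, 0, 0; -1, 0, 0, 0; 0, 0, 0, -1; 0, 0, 1, 0]

/-- The standard paraquaternionic structure: `Ψ₂`. -/
def psi2 : Matrix (Fin 4) (Fin 4) ℝ :=
  !![0, 0, 1, 0; 0, 0, 0, 1; 1, 0, 0, 0; 0, 1, 0, 0]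

/-- The standard paraquaternionic structure: `Ψ₃`. -/
def psi3 : Matrix (Fin 4) (Fin 4) ℝ :=
  !![0, 0, 0, 1; 0, 0, -1, 0; 0, -1, 0, 0; 1, 0, 0, 0]

/-- The curvature tensor `A_{κ₀,ξ}` of the Gilkey–Ivanova ansatz. -/
noncomputable def AKxi (κ₀ ξ11 ξ12 ξ13 ξ22 ξ23 ξ33 : ℝ) : V4 → V4 → V4 → V4 → ℝ :=
  fun x y z w =>
    κ₀ * Acurv0 x y z w + (1/3) *
      (ξ11 * AcurvPsi psi1 x y z w + ξ22 * AcurvPsi psi2 x y z w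
        + ξ33 * AcurvPsi psi3 x y z w + ξ12 * AcurvPsi (psi1 + psi2) x y z w
        + ξ13 * AcurvPsi (psi1 + psi3) x y z w + ξ23 * AcurvPsi (psi2 + psi3) x y z w)

/-- The `3 × 3` matrix `𝒥_{κ₀,ξ}`. -/
def Jmat (κ₀ ξ11 ξ12 ξ13 ξ22 ξ23 ξ33 : ℝ) : Matrix (Fin 3) (Fin 3) ℝ :=
  κ₀ • (1 : Matrix (Fin 3) (Fin 3) ℝ) +
    !![ξ11 + ξ12 + ξ13, -ξ12, -ξ13;
       ξ12, -ξ22 - ξ12 - ξ23, -ξ23;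
       ξ13, -ξ23, -ξ33 - ξ13 - ξ23]

/-- An oriented orthonormal basis of `(V,⟨·,·⟩)`: `b₁, b₂` timelike, `b₃, b₄` spacelike,
mutually orthogonal, with positively-oriented change-of-basis matrix. -/
def OrientedONB (b : Fin 4 → V4) : Prop :=
  (∀ i j : Fin 4, nip (b i) (b j) = if i = j then eps i else 0) ∧
  0 < (Matrix.of fun i j : Fin 4 => b j i).det

/-! On a null vector `v` the Jacobi operator is `J(v) y = 3 ∑ κᵢ ⟨y, Ψᵢ v⟩ Ψᵢ v`, and the
vectors `Ψᵢ v` span a totally isotropic plane. Hence `J(v)² = 0`, and `J(v)` is conjugate to two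
nilpotent Jordan blocks of size two exactly when its rank is two. A `2 × 2` minor of `J(v)` equals
`-9 (κ₂(κ₁+κ₃) X² + κ₃(κ₁+κ₂) Y²)` with `X² + Y² = (v₃² + v₄²)² > 0`. If the two coefficients
have the same sign, this minor never vanishes on the null cone, so all `J(v)` are conjugate.
Otherwise the quadratic form has a zero `(x, y)`, and at `v = (r, 0, x, y)` with
`r² = x² + y²` the operator `J(v)` factors through a singular `2 × 2` matrix, so it has rank at
most one, while `J(e₁ + e₃)` or `J(e₁ + e₄)` has rank two. -/

namespace Matrix

variable {n m R : Type*} [Fintype n] [Fintype m] [Field R]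

/-- Encodes `rank M ≤ 1` without ranks: every `vecMulVec a b` satisfies it, and for `X` a
matrix unit it says that a `2 × 2` minor of `M` vanishes. -/
def RankLeOne (M : Matrix n n R) : Prop :=
  ∀ X : Matrix n n R, M * X * M = trace (X * M) • M

theorem RankLeOne.mul_mul {P : Matrix m m R} (hP : P.RankLeOne) (F : Matrix n m R)
    (G : Matrix m n R) : (F * P * G).RankLeOne := by
  intro X
  calc F * P * G * X * (F * P * G) = F * (P * (G * X * F) * P) * G := by
        simp only [Matrix.mul_assoc]
    _ = trace (X * (F * P * G)) • (F * P * G) := by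
        rw [hP, Matrix.mul_smul, Matrix.smul_mul, trace_mul_cycle, ← Matrix.mul_assoc,
          trace_mul_cycle, ← Matrix.mul_assoc, trace_mul_comm]

theorem RankLeOne.smul {M : Matrix n n R} (hM : M.RankLeOne) (c : R) : (c • M).RankLeOne := by
  intro X
  rw [Matrix.mul_smul, Matrix.smul_mul, Matrix.smul_mul, Matrix.mul_smul, hM, trace_smul,
    smul_smul, smul_smul, smul_smul, smul_eq_mul, mul_right_comm]

theorem rankLeOne_of_det_eq_zero {P : Matrix (Fin 2) (Fin 2) R} (hP : P.det = 0) :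
    P.RankLeOne := by
  rw [det_fin_two] at hP
  intro X
  ext i j
  fin_cases i <;> fin_cases j <;>
    simp only [Fin.zero_eta, Fin.mk_one, Fin.isValue, mul_apply, Fin.sum_univ_two, trace_fin_two,
      Matrix.smul_apply, smul_eq_mul]
  · linear_combination -X 1 1 * hP
  · linear_combination X 0 1 * hP
  · linear_combination X 1 0 * hP
  · linear_combination -X 0 0 * hP

theorem RankLeOne.minor_eq [DecidableEq n] {M : Matrix n n R} (hM : M.RankLeOne) (i j a b : n) :
    M i a * M b j = M b a * M i j := by
  have := congrFun (congrFun (hM (single a b 1)) i) j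
  simpa [mul_apply, trace, single_apply, ite_and, Finset.sum_ite_eq'] using this

end Matrix

namespace SimilarM4

variable {M N K : Matrix (Fin 4) (Fin 4) ℝ}

theorem symm (h : SimilarM4 M N) : SimilarM4 N M := by
  obtain ⟨L, hL, hML⟩ := h
  refine ⟨L⁻¹, isUnit_nonsing_inv_det L hL, ?_⟩
  calc N * L⁻¹ = L⁻¹ * (L * N) * L⁻¹ := by rw [← Matrix.mul_assoc, nonsing_inv_mul L hL, one_mul]
    _ = L⁻¹ * M := by rw [← hML, Matrix.mul_assoc, Matrix.mul_assoc, mul_nonsing_inv L hL,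
        mul_one]

theorem trans (h : SimilarM4 M N) (h' : SimilarM4 N K) : SimilarM4 M K := by
  obtain ⟨L, hL, hML⟩ := h
  obtain ⟨L', hL', hNL'⟩ := h'
  refine ⟨L * L', by rw [det_mul]; exact hL.mul hL', ?_⟩
  rw [← Matrix.mul_assoc, hML, Matrix.mul_assoc, hNL', Matrix.mul_assoc]

theorem rankLeOne (h : SimilarM4 M N) (hN : N.RankLeOne) : M.RankLeOne := by
  obtain ⟨L, hL, hML⟩ := h
  have hM : M = L * N * L⁻¹ := by
    rw [← hML, Matrix.mul_assoc, mul_nonsing_inv L hL, mul_one]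
  exact hM ▸ hN.mul_mul L L⁻¹

end SimilarM4

/-- The Jordan normal form of a nilpotent `4 × 4` matrix of rank two. -/
def nilJordan22 : Matrix (Fin 4) (Fin 4) ℝ := !![0, 1, 0, 0; 0, 0, 0, 0; 0, 0, 0, 1; 0, 0, 0, 0]

theorem similarM4_nilJordan22_of_mul_self_eq_zero {M : Matrix (Fin 4) (Fin 4) ℝ} (hM : M * M = 0)
    (hminor : M 2 0 * M 3 1 - M 2 1 * M 3 0 ≠ 0) : SimilarM4 M nilJordan22 := by
  refine ⟨of fun i => ![M i 0, stdb 0 i, M i 1, stdb 1 i], ?_, ?_⟩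
  · rw [isUnit_iff_ne_zero, ← neg_ne_zero]
    convert hminor using 1
    simp [det_succ_row_zero, Fin.sum_univ_succ, stdb, Fin.succAbove]
    ring
  · ext i k
    have h0 := congrFun (congrFun hM i) 0
    have h1 := congrFun (congrFun hM i) 1
    simp only [mul_apply, Fin.sum_univ_four, Matrix.zero_apply] at h0 h1
    fin_cases k <;> simp [nilJordan22, mul_apply, Fin.sum_univ_four, stdb, h0, h1]

/-- `flat a` is the covector `⟨·, a⟩`, so `vecMulVec a (flat b)` is the endomorphism
`y ↦ ⟨y, b⟩ a`. -/
def flat (a : V4) : V4 := fun i => eps i * a i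

theorem flat_dotProduct (a b : V4) : flat a ⬝ᵥ b = nip a b := by
  simp only [flat, nip, dotProduct, Fin.sum_univ_four, eps, cons_val_zero, cons_val_one, cons_val]
  ring

theorem nip_comm (x y : V4) : nip x y = nip y x := by
  unfold nip
  ring

theorem nip_stdb (x : V4) (i : Fin 4) : nip x (stdb i) = eps i * x i := by
  fin_cases i <;> simp [nip, stdb, eps]

theorem eps_mul_self (i : Fin 4) : eps i * eps i = 1 := by
  fin_cases i <;> norm_num [eps]

theorem SkewAdjointM.nip_mulVec_self {Ψ : Matrix (Fin 4) (Fin 4) ℝ} (hΨ : SkewAdjointM Ψ)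
    (x : V4) : nip (Ψ *ᵥ x) x = 0 := by
  linarith [hΨ x x, nip_comm x (Ψ *ᵥ x)]

theorem jacobi_sum_smul {ι : Type*} (s : Finset ι) (c : ι → ℝ)
    (A : ι → V4 → V4 → V4 → V4 → ℝ) (x : V4) :
    jacobi (∑ i ∈ s, c i • A i) x = ∑ i ∈ s, c i • jacobi (A i) x := by
  ext k l
  simp [jacobi, Finset.sum_apply, Matrix.sum_apply, Finset.mul_sum, mul_left_comm]

theorem SkewAdjointM.jacobi_acurvPsi {Ψ : Matrix (Fin 4) (Fin 4) ℝ} (hΨ : SkewAdjointM Ψ)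
    (x : V4) : jacobi (AcurvPsi Ψ) x = (3 : ℝ) • vecMulVec (Ψ *ᵥ x) (flat (Ψ *ᵥ x)) := by
  ext i j
  have hi := eps_mul_self i
  simp only [jacobi, AcurvPsi, of_apply, Matrix.smul_apply, vecMulVec_apply, flat]
  rw [hΨ.nip_mulVec_self, hΨ (stdb j) x, nip_comm (stdb j)]
  simp only [nip_stdb]
  linear_combination (3 * (Ψ *ᵥ x) i * eps j * (Ψ *ᵥ x) j) * hi

theorem sq_smul_vecMulVec_flat (r : ℝ) (a : V4) :
    r ^ 2 • vecMulVec a (flat a) = vecMulVec (r • a) (flat (r • a)) := by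
  ext k l
  simp only [Matrix.smul_apply, vecMulVec_apply, flat, Pi.smul_apply, smul_eq_mul]
  ring

theorem vecMulVec_flat_mul_vecMulVec_eq_zero {a b : V4} (h : nip a b = 0) (c d : V4) :
    vecMulVec c (flat a) * vecMulVec b d = 0 := by
  rw [vecMulVec_mul_vecMulVec, flat_dotProduct, h, zero_smul]
  ext
  simp [vecMulVec_apply]

theorem sum_vecMulVec_flat_mul_self {ι : Type*} [Fintype ι] (c : ι → ℝ) (a : ι → V4)
    (h : ∀ i j, nip (a i) (a j) = 0) :
    (∑ i, c i • vecMulVec (a i) (flat (a i))) * ∑ i, c i • vecMulVec (a i) (flat (a i)) = 0 := by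
  simp only [Finset.sum_mul, Finset.mul_sum, smul_mul_smul_comm,
    vecMulVec_flat_mul_vecMulVec_eq_zero (h _ _), smul_zero, Finset.sum_const_zero]

/-- `psi i` is `Ψ_{i+1}`. -/
def psi : Fin 3 → Matrix (Fin 4) (Fin 4) ℝ := ![psi1, psi2, psi3]

def curvTypeIa (κ₁ κ₂ κ₃ : ℝ) : V4 → V4 → V4 → V4 → ℝ :=
  ∑ i, ![κ₁, κ₂, κ₃] i • AcurvPsi (psi i)

theorem skewAdjointM_psi (i : Fin 3) : SkewAdjointM (psi i) := by
  intro x y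
  fin_cases i <;>
    · simp [psi, psi1, psi2, psi3, nip, mulVec, dotProduct, Fin.sum_univ_four]
      ring

theorem nip_psi_mulVec_psi_mulVec_eq_zero {v : V4} (hv : nip v v = 0) (i j : Fin 3) :
    nip (psi i *ᵥ v) (psi j *ᵥ v) = 0 := by
  simp only [nip] at hv
  fin_cases i <;> fin_cases j <;>
    simp [psi, psi1, psi2, psi3, nip, mulVec, dotProduct, Fin.sum_univ_four] <;>
    linarith

theorem jacobi_curvTypeIa (κ₁ κ₂ κ₃ : ℝ) (v : V4) :
    jacobi (curvTypeIa κ₁ κ₂ κ₃) v =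
      (3 : ℝ) • ∑ i, ![κ₁, κ₂, κ₃] i • vecMulVec (psi i *ᵥ v) (flat (psi i *ᵥ v)) := by
  rw [curvTypeIa, jacobi_sum_smul, Finset.smul_sum]
  exact Finset.sum_congr rfl fun i _ => by rw [(skewAdjointM_psi i).jacobi_acurvPsi, smul_comm]

theorem jacobi_curvTypeIa_apply (κ₁ κ₂ κ₃ : ℝ) (v : V4) (k l : Fin 4) :
    jacobi (curvTypeIa κ₁ κ₂ κ₃) v k l =
      3 * ∑ i, ![κ₁, κ₂, κ₃] i * ((psi i *ᵥ v) k * eps l * (psi i *ᵥ v) l) := by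
  simp [jacobi_curvTypeIa, Matrix.sum_apply, vecMulVec_apply, flat, mul_assoc]

theorem jacobi_curvTypeIa_mul_self {v : V4} (hv : nip v v = 0) (κ₁ κ₂ κ₃ : ℝ) :
    jacobi (curvTypeIa κ₁ κ₂ κ₃) v * jacobi (curvTypeIa κ₁ κ₂ κ₃) v = 0 := by
  rw [jacobi_curvTypeIa, smul_mul_smul_comm,
    sum_vecMulVec_flat_mul_self _ _ (nip_psi_mulVec_psi_mulVec_eq_zero hv), smul_zero]

theorem jacobi_curvTypeIa_minor (κ₁ κ₂ κ₃ : ℝ) (v : V4) :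
    let J := jacobi (curvTypeIa κ₁ κ₂ κ₃) v
    J 2 0 * J 3 1 - J 2 1 * J 3 0 = -9 * (κ₂ * (κ₁ + κ₃) * (v 0 * v 2 + v 1 * v 3) ^ 2
      + κ₃ * (κ₁ + κ₂) * (v 0 * v 3 - v 1 * v 2) ^ 2) := by
  simp only [jacobi_curvTypeIa_apply, Fin.sum_univ_three]
  simp [eps, psi, psi1, psi2, psi3, mulVec, dotProduct, Fin.sum_univ_four]
  ring

theorem exists_mul_sq_add_mul_sq_eq_zero {d₀ d₁ : ℝ} (hd : d₀ * d₁ ≤ 0) (hne : d₀ ≠ 0 ∨ d₁ ≠ 0) :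
    ∃ r x y : ℝ, r ≠ 0 ∧ r ^ 2 = x ^ 2 + y ^ 2 ∧ d₀ * x ^ 2 + d₁ * y ^ 2 = 0 := by
  have hpos : 0 < |d₀| + |d₁| := by
    rcases hne with h | h
    · exact add_pos_of_pos_of_nonneg (abs_pos.mpr h) (abs_nonneg _)
    · exact add_pos_of_nonneg_of_pos (abs_nonneg _) (abs_pos.mpr h)
  refine ⟨√(|d₀| + |d₁|), √|d₁|, √|d₀|, (Real.sqrt_pos.mpr hpos).ne', ?_, ?_⟩
  · rw [Real.sq_sqrt hpos.le, Real.sq_sqrt (abs_nonneg _), Real.sq_sqrt (abs_nonneg _), add_comm]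
  · rw [Real.sq_sqrt (abs_nonneg _), Real.sq_sqrt (abs_nonneg _)]
    rcases le_total 0 d₀ with h0 | h0 <;> rcases le_total 0 d₁ with h1 | h1 <;>
      simp only [abs_of_nonneg, abs_of_nonpos, h0, h1] <;> nlinarith

theorem mul_sq_add_mul_sq_ne_zero {d₀ d₁ a b : ℝ} (hd : 0 < d₀ * d₁) (hab : 0 < a ^ 2 + b ^ 2) :
    d₀ * a ^ 2 + d₁ * b ^ 2 ≠ 0 := by
  rcases mul_pos_iff.mp hd with ⟨h0, h1⟩ | ⟨h0, h1⟩
  · apply ne_of_gt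
    rcases lt_or_ge 0 (a ^ 2) with ha | ha
    · nlinarith [mul_nonneg h1.le (sq_nonneg b)]
    · nlinarith [mul_nonneg h0.le (sq_nonneg a), sq_nonneg a]
  · apply ne_of_lt
    rcases lt_or_ge 0 (a ^ 2) with ha | ha
    · nlinarith [mul_nonneg (neg_nonneg.mpr h1.le) (sq_nonneg b)]
    · nlinarith [mul_nonneg (neg_nonneg.mpr h0.le) (sq_nonneg a), sq_nonneg a]

theorem sq_add_sq_pos_of_null {v : V4} (hv : v ≠ 0) (hnull : nip v v = 0) :
    0 < (v 0 * v 2 + v 1 * v 3) ^ 2 + (v 0 * v 3 - v 1 * v 2) ^ 2 := by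
  simp only [nip] at hnull
  have hlagrange : (v 0 * v 2 + v 1 * v 3) ^ 2 + (v 0 * v 3 - v 1 * v 2) ^ 2
      = (v 2 ^ 2 + v 3 ^ 2) ^ 2 := by
    linear_combination -(v 2 ^ 2 + v 3 ^ 2) * hnull
  have h23 : v 2 ^ 2 + v 3 ^ 2 ≠ 0 := by
    intro h23
    obtain ⟨h2, h3⟩ := (add_eq_zero_iff_of_nonneg (sq_nonneg _) (sq_nonneg _)).mp h23
    obtain ⟨h0, h1⟩ := (add_eq_zero_iff_of_nonneg (sq_nonneg (v 0)) (sq_nonneg (v 1))).mp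
      (by linear_combination -hnull + h23)
    apply hv
    ext i
    fin_cases i <;> simp_all
  rw [hlagrange]
  positivity

theorem smul_psi_mulVec_of_sq_eq {r x y : ℝ} (hr2 : r ^ 2 = x ^ 2 + y ^ 2) :
    let v : V4 := ![r, 0, x, y]
    r • (psi2 *ᵥ v) = x • v - y • (psi1 *ᵥ v) ∧ r • (psi3 *ᵥ v) = y • v + x • (psi1 *ᵥ v) := by
  constructor <;> ext k <;> fin_cases k <;> simp [psi1, psi2, psi3] <;> linarith

theorem sq_smul_jacobi_curvTypeIa (κ₁ κ₂ κ₃ : ℝ) {r x y : ℝ} (hr2 : r ^ 2 = x ^ 2 + y ^ 2) :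
    let v : V4 := ![r, 0, x, y]
    let f : V4 := psi1 *ᵥ v
    r ^ 2 • jacobi (curvTypeIa κ₁ κ₂ κ₃) v = (of fun k i => ![v, f] i k) *
      ((3 : ℝ) • !![κ₂ * x ^ 2 + κ₃ * y ^ 2, (κ₃ - κ₂) * x * y;
        (κ₃ - κ₂) * x * y, κ₁ * r ^ 2 + κ₂ * y ^ 2 + κ₃ * x ^ 2]) * of ![flat v, flat f] := by
  intro v f
  obtain ⟨h₂, h₃⟩ := smul_psi_mulVec_of_sq_eq hr2
  rw [jacobi_curvTypeIa, Fin.sum_univ_three]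
  simp only [psi, cons_val_zero, cons_val_one, cons_val_two, head_cons, tail_cons]
  calc r ^ 2 • (3 : ℝ) • (κ₁ • vecMulVec f (flat f) + κ₂ • vecMulVec (psi2 *ᵥ v) (flat (psi2 *ᵥ v))
        + κ₃ • vecMulVec (psi3 *ᵥ v) (flat (psi3 *ᵥ v)))
      = (3 : ℝ) • (κ₁ • r ^ 2 • vecMulVec f (flat f)
        + κ₂ • vecMulVec (r • (psi2 *ᵥ v)) (flat (r • (psi2 *ᵥ v)))
        + κ₃ • vecMulVec (r • (psi3 *ᵥ v)) (flat (r • (psi3 *ᵥ v)))) := by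
        rw [← sq_smul_vecMulVec_flat, ← sq_smul_vecMulVec_flat]
        module
    _ = (3 : ℝ) • (κ₁ • r ^ 2 • vecMulVec f (flat f)
        + κ₂ • vecMulVec (x • v - y • f) (flat (x • v - y • f))
        + κ₃ • vecMulVec (y • v + x • f) (flat (y • v + x • f))) := by rw [h₂, h₃]
    _ = _ := by
        clear_value v f
        ext k l
        simp [vecMulVec_apply, flat, mul_apply, Fin.sum_univ_two]
        ring

theorem rankLeOne_jacobi_curvTypeIa {κ₁ κ₂ κ₃ r x y : ℝ} (hr : r ≠ 0)
    (hr2 : r ^ 2 = x ^ 2 + y ^ 2)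
    (hxy : κ₂ * (κ₁ + κ₃) * x ^ 2 + κ₃ * (κ₁ + κ₂) * y ^ 2 = 0) :
    (jacobi (curvTypeIa κ₁ κ₂ κ₃) ![r, 0, x, y]).RankLeOne := by
  have hQ := rankLeOne_of_det_eq_zero (P := !![κ₂ * x ^ 2 + κ₃ * y ^ 2, (κ₃ - κ₂) * x * y;
    (κ₃ - κ₂) * x * y, κ₁ * r ^ 2 + κ₂ * y ^ 2 + κ₃ * x ^ 2]) (by
      rw [det_fin_two_of]
      linear_combination (x ^ 2 + y ^ 2) * hxy + κ₁ * (κ₂ * x ^ 2 + κ₃ * y ^ 2) * hr2)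
  have hJ : (r ^ 2 • jacobi (curvTypeIa κ₁ κ₂ κ₃) ![r, 0, x, y]).RankLeOne := by
    rw [sq_smul_jacobi_curvTypeIa κ₁ κ₂ κ₃ hr2]
    exact (hQ.smul 3).mul_mul _ _
  have hJ' := hJ.smul (r ^ 2)⁻¹
  rwa [smul_smul, inv_mul_cancel₀ (pow_ne_zero 2 hr), one_smul] at hJ'

theorem NullJordanOsserman.rankLeOne {A : V4 → V4 → V4 → V4 → ℝ} (hA : NullJordanOsserman A)
    {v : V4} (hv : v ≠ 0) (hvnull : nip v v = 0) (hJ : (jacobi A v).RankLeOne)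
    {w : V4} (hw : w ≠ 0) (hwnull : nip w w = 0) : (jacobi A w).RankLeOne :=
  (hA w v hw hv hwnull hvnull).rankLeOne hJ

theorem similarM4_jacobi_curvTypeIa {κ₁ κ₂ κ₃ : ℝ}
    (hκ : 0 < κ₂ * (κ₁ + κ₃) * (κ₃ * (κ₁ + κ₂))) {v : V4} (hv : v ≠ 0) (hnull : nip v v = 0) :
    SimilarM4 (jacobi (curvTypeIa κ₁ κ₂ κ₃) v) nilJordan22 := by
  refine similarM4_nilJordan22_of_mul_self_eq_zero (jacobi_curvTypeIa_mul_self hnull _ _ _) ?_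
  rw [jacobi_curvTypeIa_minor]
  exact mul_ne_zero (by norm_num) (mul_sq_add_mul_sq_ne_zero hκ (sq_add_sq_pos_of_null hv hnull))

theorem nullJordanOsserman_curvTypeIa {κ₁ κ₂ κ₃ : ℝ}
    (hκ : 0 < κ₂ * (κ₁ + κ₃) * (κ₃ * (κ₁ + κ₂))) : NullJordanOsserman (curvTypeIa κ₁ κ₂ κ₃) :=
  fun _ _ hu hw hunull hwnull => (similarM4_jacobi_curvTypeIa hκ hu hunull).trans
    (similarM4_jacobi_curvTypeIa hκ hw hwnull).symm

theorem pos_of_nullJordanOsserman_curvTypeIa {κ₁ κ₂ κ₃ : ℝ}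
    (hne : κ₂ * (κ₁ + κ₃) ≠ 0 ∨ κ₃ * (κ₁ + κ₂) ≠ 0)
    (hA : NullJordanOsserman (curvTypeIa κ₁ κ₂ κ₃)) :
    0 < κ₂ * (κ₁ + κ₃) * (κ₃ * (κ₁ + κ₂)) := by
  by_contra! hκ
  obtain ⟨r, x, y, hr, hr2, hxy⟩ := exists_mul_sq_add_mul_sq_eq_zero hκ hne
  have hv : (![r, 0, x, y] : V4) ≠ 0 := fun h => hr (congrFun h 0)
  have hvnull : nip ![r, 0, x, y] ![r, 0, x, y] = 0 := by
    simp only [nip, cons_val_zero, cons_val_one, cons_val]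
    linear_combination -hr2
  have hvanish (w : V4) (hw : w ≠ 0) (hwnull : nip w w = 0) :
      κ₂ * (κ₁ + κ₃) * (w 0 * w 2 + w 1 * w 3) ^ 2
        + κ₃ * (κ₁ + κ₂) * (w 0 * w 3 - w 1 * w 2) ^ 2 = 0 := by
    have hminor := (hA.rankLeOne hv hvnull (rankLeOne_jacobi_curvTypeIa hr hr2 hxy) hw
      hwnull).minor_eq 2 1 0 3
    have := jacobi_curvTypeIa_minor κ₁ κ₂ κ₃ w
    linarith
  have h₁₃ : κ₂ * (κ₁ + κ₃) = 0 := by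
    simpa using hvanish ![1, 0, 1, 0] (fun h => by simpa using congrFun h 0) (by simp [nip])
  have h₁₄ : κ₃ * (κ₁ + κ₂) = 0 := by
    simpa using hvanish ![1, 0, 0, 1] (fun h => by simpa using congrFun h 0) (by simp [nip])
  exact hne.elim (· h₁₃) (· h₁₄)

/-- Section 3.5: for `A = κ₁A^{Ψ₁} + κ₂A^{Ψ₂} + κ₃A^{Ψ₃}` with the standard
paraquaternionic structure and distinct eigenvalues `3κ₁, −3κ₂, −3κ₃`, the model is
null Jordan Osserman if and only if `κ₂κ₃(κ₁+κ₂)(κ₁+κ₃) > 0`. -/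
theorem type_Ia_distinct_null_jordan_osserman_iff (κ₁ κ₂ κ₃ : ℝ)
    (h12 : κ₁ + κ₂ ≠ 0) (h13 : κ₁ + κ₃ ≠ 0) (h23 : κ₂ ≠ κ₃)
    (A : V4 → V4 → V4 → V4 → ℝ)
    (hA : A = fun x y z w => κ₁ * AcurvPsi psi1 x y z w + κ₂ * AcurvPsi psi2 x y z w
      + κ₃ * AcurvPsi psi3 x y z w) :
    NullJordanOsserman A ↔ 0 < κ₂ * κ₃ * (κ₁ + κ₂) * (κ₁ + κ₃) := by
  have hA' : A = curvTypeIa κ₁ κ₂ κ₃ := by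
    subst hA
    funext x y z w
    simp [curvTypeIa, Fin.sum_univ_three, psi]
  have hne : κ₂ * (κ₁ + κ₃) ≠ 0 ∨ κ₃ * (κ₁ + κ₂) ≠ 0 := by
    by_contra! h
    exact h23 (((mul_eq_zero.mp h.1).resolve_right h13).trans
      ((mul_eq_zero.mp h.2).resolve_right h12).symm)
  rw [hA', show κ₂ * κ₃ * (κ₁ + κ₂) * (κ₁ + κ₃) = κ₂ * (κ₁ + κ₃) * (κ₃ * (κ₁ + κ₂)) by ring]
  exact ⟨pos_of_nullJordanOsserman_curvTypeIa hne, nullJordanOsserman_curvTypeIa⟩
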